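/- arXiv:1309.0279 — 10 statements merged into one kernel-verified Lean document; each statement's English description precedes it below -/
import Mathlib

section
/- Let n ≥ 2 and t > 1. The map sending z = x + iy to (√(2/(t+1))·x, √(2/(t−1))·y) is a homeomorphism from M_t^n (with its subspace topology) onto the Stiefel-type manifold V := {(x,y) ∈ ℝ^{n+1} × ℝ^{n+1} : ‖x‖ = 1, ‖y‖ = 1, ⟨x,y⟩ = 0}. -/
/-!
Write `z = x + i y`. Since `∑ z_j² = ‖x‖² - ‖y‖² + 2i⟪x, y⟫` and `∑ |z_j|² = ‖x‖² + ‖y‖²`, the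
point `z` lies on `M_t` exactly when `‖x‖² = (t + 1) / 2`, `‖y‖² = (t - 1) / 2` and `⟪x, y⟫ = 0`.
Hence `M_t` is carried onto `V` by the homeomorphism `z ↦ (x, y)` followed by rescaling the two
factors, which is again a homeomorphism because `t > 1` makes both scalars nonzero.
-/

open Complex

namespace EuclideanSpace

noncomputable def reImHomeomorph (ι : Type*) [Fintype ι] :
    EuclideanSpace ℂ ι ≃ₜ EuclideanSpace ℝ ι × EuclideanSpace ℝ ι where
  toFun z := (WithLp.toLp 2 fun j => (z j).re, WithLp.toLp 2 fun j => (z j).im)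
  invFun p := WithLp.toLp 2 fun j => equivRealProdCLM.symm (p.1 j, p.2 j)
  left_inv _ := rfl
  right_inv _ := rfl
  continuous_toFun := by fun_prop
  continuous_invFun := by fun_prop

variable {ι : Type*} [Fintype ι]

@[simp]
lemma reImHomeomorph_apply_fst (z : EuclideanSpace ℂ ι) (j : ι) :
    (reImHomeomorph ι z).1 j = (z j).re := rfl

@[simp]
lemma reImHomeomorph_apply_snd (z : EuclideanSpace ℂ ι) (j : ι) :
    (reImHomeomorph ι z).2 j = (z j).im := rfl

lemma re_sum_sq (z : EuclideanSpace ℂ ι) :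
    (∑ j, z j ^ 2).re = ‖(reImHomeomorph ι z).1‖ ^ 2 - ‖(reImHomeomorph ι z).2‖ ^ 2 := by
  rw [norm_sq_eq, norm_sq_eq, ← Finset.sum_sub_distrib, re_sum]
  simp [sq]

lemma im_sum_sq (z : EuclideanSpace ℂ ι) :
    (∑ j, z j ^ 2).im = 2 * inner ℝ (reImHomeomorph ι z).1 (reImHomeomorph ι z).2 := by
  rw [PiLp.inner_apply, Finset.mul_sum, im_sum]
  refine Finset.sum_congr rfl fun j _ => ?_
  simp only [sq, mul_im, reImHomeomorph_apply_fst, reImHomeomorph_apply_snd, RCLike.inner_apply,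
    conj_trivial]
  ring

lemma sum_norm_sq (z : EuclideanSpace ℂ ι) :
    ∑ j, ‖z j‖ ^ 2 = ‖(reImHomeomorph ι z).1‖ ^ 2 + ‖(reImHomeomorph ι z).2‖ ^ 2 := by
  rw [norm_sq_eq, norm_sq_eq, ← Finset.sum_add_distrib]
  refine Finset.sum_congr rfl fun j _ => ?_
  simp only [Complex.sq_norm, normSq_apply, Real.norm_eq_abs, sq_abs, reImHomeomorph_apply_fst,
    reImHomeomorph_apply_snd]
  ring

lemma sum_sq_eq_one_and_sum_norm_sq_eq_iff (z : EuclideanSpace ℂ ι) (t : ℝ) :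
    (∑ j, z j ^ 2 = 1 ∧ ∑ j, ‖z j‖ ^ 2 = t) ↔
      ‖(reImHomeomorph ι z).1‖ ^ 2 = (t + 1) / 2 ∧ ‖(reImHomeomorph ι z).2‖ ^ 2 = (t - 1) / 2 ∧
        inner ℝ (reImHomeomorph ι z).1 (reImHomeomorph ι z).2 = 0 := by
  rw [Complex.ext_iff, re_sum_sq, im_sum_sq, sum_norm_sq, one_re, one_im]
  constructor
  · rintro ⟨⟨hre, him⟩, hnorm⟩
    exact ⟨by linarith, by linarith, by linarith⟩
  · rintro ⟨hx, hy, hxy⟩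
    exact ⟨⟨by linarith, by linarith⟩, by linarith⟩

end EuclideanSpace

lemma norm_sqrt_div_smul_eq_one_iff {E : Type*} [SeminormedAddCommGroup E] [NormedSpace ℝ E]
    {a b : ℝ} (ha : 0 < a) (hb : 0 < b) (x : E) : ‖√(b / a) • x‖ = 1 ↔ ‖x‖ ^ 2 = a / b := by
  rw [← pow_left_inj₀ (norm_nonneg _) zero_le_one two_ne_zero, one_pow, norm_smul, mul_pow,
    Real.norm_eq_abs, sq_abs, Real.sq_sqrt (by positivity), eq_div_iff hb.ne']
  field_simp

theorem stmt_1_general (n : ℕ) (t : ℝ) (ht : 1 < t) :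
    ∃ h : ({z : EuclideanSpace ℂ (Fin (n + 1)) |
        (∑ j, (z j) ^ 2) = 1 ∧ (∑ j, ‖z j‖ ^ 2) = t} ≃ₜ
        {p : EuclideanSpace ℝ (Fin (n + 1)) × EuclideanSpace ℝ (Fin (n + 1)) |
        ‖p.1‖ = 1 ∧ ‖p.2‖ = 1 ∧ inner ℝ p.1 p.2 = (0 : ℝ)}),
      ∀ z : {z : EuclideanSpace ℂ (Fin (n + 1)) |
          (∑ j, (z j) ^ 2) = 1 ∧ (∑ j, ‖z j‖ ^ 2) = t},
        (∀ j, (h z).val.1 j = Real.sqrt (2 / (t + 1)) * ((z : EuclideanSpace ℂ (Fin (n + 1))) j).re) ∧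
        (∀ j, (h z).val.2 j = Real.sqrt (2 / (t - 1)) * ((z : EuclideanSpace ℂ (Fin (n + 1))) j).im) := by
  have hplus : 0 < t + 1 := by linarith
  have hminus : 0 < t - 1 := by linarith
  have hc : √(2 / (t + 1)) ≠ 0 := by positivity
  have hd : √(2 / (t - 1)) ≠ 0 := by positivity
  let scale : EuclideanSpace ℝ (Fin (n + 1)) × EuclideanSpace ℝ (Fin (n + 1)) ≃ₜ _ :=
    (Homeomorph.smulOfNeZero _ hc).prodCongr (Homeomorph.smulOfNeZero _ hd)
  refine ⟨((EuclideanSpace.reImHomeomorph (Fin (n + 1))).trans scale).subtype fun z => ?_,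
    fun z => ⟨fun j => rfl, fun j => rfl⟩⟩
  simp only [Set.mem_ofPred_eq, EuclideanSpace.sum_sq_eq_one_and_sum_norm_sq_eq_iff,
    Homeomorph.trans_apply, scale, Homeomorph.coe_prodCongr, Prod.map_fst, Prod.map_snd,
    Homeomorph.smulOfNeZero_apply, norm_sqrt_div_smul_eq_one_iff hplus two_pos,
    norm_sqrt_div_smul_eq_one_iff hminus two_pos, inner_smul_left, inner_smul_right, conj_trivial,
    mul_eq_zero, hc, hd, false_or]

/-- For `n ≥ 2`, `t > 1`, the map `z = x + iy ↦ (√(2/(t+1))·x, √(2/(t−1))·y)`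
is a homeomorphism from `M_t^n` onto
`V = {(x,y) ∈ ℝ^{n+1} × ℝ^{n+1} : ‖x‖ = 1, ‖y‖ = 1, ⟨x,y⟩ = 0}`. -/
theorem stmt_1 (n : ℕ) (hn : 2 ≤ n) (t : ℝ) (ht : 1 < t) :
    ∃ h : ({z : EuclideanSpace ℂ (Fin (n + 1)) |
        (∑ j, (z j) ^ 2) = 1 ∧ (∑ j, ‖z j‖ ^ 2) = t} ≃ₜ
        {p : EuclideanSpace ℝ (Fin (n + 1)) × EuclideanSpace ℝ (Fin (n + 1)) |
        ‖p.1‖ = 1 ∧ ‖p.2‖ = 1 ∧ inner ℝ p.1 p.2 = (0 : ℝ)}),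
      ∀ z : {z : EuclideanSpace ℂ (Fin (n + 1)) |
          (∑ j, (z j) ^ 2) = 1 ∧ (∑ j, ‖z j‖ ^ 2) = t},
        (∀ j, (h z).val.1 j = Real.sqrt (2 / (t + 1)) * ((z : EuclideanSpace ℂ (Fin (n + 1))) j).re) ∧
        (∀ j, (h z).val.2 j = Real.sqrt (2 / (t - 1)) * ((z : EuclideanSpace ℂ (Fin (n + 1))) j).im) :=
  stmt_1_general n t ht
end

section
/- For every (w₁, w₂, w₃, w₄) ∈ ℂ⁴ with w₁w₂ + w₃w₄ = 1, the two complex numbers w₃w₄² + 2i·w₁w₂w₄ and 2w₂w₃w₄ + i·w₁w₂² do not vanish simultaneously. (These are the two nontrivial entries of the Jacobian matrix of F, so F has maximal rank at every point of the quadric.) -/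
open Complex

/-- On the quadric `w₁w₂ + w₃w₄ = 1`, the two entries
`w₃w₄² + 2i·w₁w₂w₄` and `2w₂w₃w₄ + i·w₁w₂²` of the Jacobian of `F` do not vanish
simultaneously. -/
theorem stmt_4 (w₁ w₂ w₃ w₄ : ℂ) (hQ : w₁ * w₂ + w₃ * w₄ = 1) :
    ¬(w₃ * w₄ ^ 2 + 2 * Complex.I * w₁ * w₂ * w₄ = 0 ∧
      2 * w₂ * w₃ * w₄ + Complex.I * w₁ * w₂ ^ 2 = 0) := by
  rintro ⟨hA, hB⟩
  have hw : w₂ * w₄ = 0 := by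
    linear_combination ((-1 - 2 * Complex.I) / 3) * w₂ * hA +
      ((2 + Complex.I) / 3) * w₄ * hB - w₂ * w₄ * hQ + w₁ * w₂ ^ 2 * w₄ * Complex.I_sq
  rcases mul_eq_zero.mp hw with h | h
  · subst h
    have : (1 : ℂ) = 0 := by
      linear_combination w₃ * hA - (1 + w₃ * w₄) * hQ
    exact one_ne_zero this
  · subst h
    have : (1 : ℂ) = 0 := by
      linear_combination (-Complex.I) * w₁ * hB - (1 + w₁ * w₂) * hQ + w₁ ^ 2 * w₂ ^ 2 * Complex.I_sq
    exact one_ne_zero this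
end

section
/- Let t > 1. There exists a point (w₁,w₂,w₃,w₄) ∈ ℂ⁴ satisfying w₁w₂ + w₃w₄ = 1, |w₁|² + |w₂|² + |w₃|² + |w₄|² = 2t, and (3i−3)·w₃²w₄² + (2−4i)·w₃w₄ + i = 0, if and only if t ≥ √((2+√2)/3). (Equivalently: the restriction of F to the quadric degenerates at some point of M_t³ if and only if t ≥ √((2+√2)/3).) -/
/-!
Write `u = w₃w₄`, so that `w₁w₂ = 1 - u`. The Jacobian condition is a quadratic equation
in `u` with roots `1/2 ± √2/6 - i/6`; for both of them `‖u‖ + ‖1 - u‖ = √((2 + √2)/3)`.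
Given the products `w₁w₂ = p` and `w₃w₄ = q`, the value of `∑ ‖wᵢ‖²` ranges exactly over
`[2‖p‖ + 2‖q‖, ∞)` (AM-GM), so the sphere `∑ ‖wᵢ‖² = 2t` meets the Jacobian locus iff
`2√((2 + √2)/3) ≤ 2t`.
-/

open Complex

theorem two_mul_norm_mul_le_norm_sq_add_norm_sq {R : Type*} [NonUnitalSeminormedRing R]
    (a b : R) : 2 * ‖a * b‖ ≤ ‖a‖ ^ 2 + ‖b‖ ^ 2 := by
  nlinarith [norm_mul_le a b, two_mul_le_add_sq ‖a‖ ‖b‖]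

namespace RCLike

variable {𝕜 : Type*} [RCLike 𝕜]

theorem exists_mul_eq_and_norm_sq_add_norm_sq_eq (v : 𝕜) {s : ℝ} (hs : 2 * ‖v‖ ≤ s) :
    ∃ a b : 𝕜, a * b = v ∧ ‖a‖ ^ 2 + ‖b‖ ^ 2 = s := by
  -- `‖a‖ ^ 2 = y` and `‖b‖ ^ 2 = s - y`, with `y` the larger root of `y (s - y) = ‖v‖ ^ 2`.
  have hv := norm_nonneg v
  set D := √(s ^ 2 - 4 * ‖v‖ ^ 2)
  have hD : D ^ 2 = s ^ 2 - 4 * ‖v‖ ^ 2 := Real.sq_sqrt (by nlinarith)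
  have hD0 : 0 ≤ D := Real.sqrt_nonneg _
  set y := (s + D) / 2 with hy_def
  have hy : y * (s - y) = ‖v‖ ^ 2 := by linear_combination (-1 / 4 : ℝ) * hD
  rcases (show 0 ≤ y by linarith).eq_or_lt with hy0 | hy0
  · have hv0 : v = 0 := by simpa [← hy0] using hy.symm
    refine ⟨0, 0, by rw [hv0, mul_zero], ?_⟩
    rw [norm_zero]
    linarith
  · have hsqrt : ((√y : ℝ) : 𝕜) ≠ 0 := ofReal_ne_zero.2 (Real.sqrt_pos.2 hy0).ne'
    refine ⟨(√y : ℝ), v / (√y : ℝ), mul_div_cancel₀ v hsqrt, ?_⟩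
    rw [norm_div, div_pow, norm_ofReal, sq_abs, Real.sq_sqrt hy0.le, ← hy]
    field_simp
    ring

theorem exists_norm_sq_sum_eq_iff (p q : 𝕜) (s : ℝ) :
    (∃ w₁ w₂ w₃ w₄ : 𝕜, w₁ * w₂ = p ∧ w₃ * w₄ = q ∧
        ‖w₁‖ ^ 2 + ‖w₂‖ ^ 2 + ‖w₃‖ ^ 2 + ‖w₄‖ ^ 2 = s) ↔
      2 * ‖p‖ + 2 * ‖q‖ ≤ s := by
  constructor
  · rintro ⟨w₁, w₂, w₃, w₄, rfl, rfl, rfl⟩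
    linarith [two_mul_norm_mul_le_norm_sq_add_norm_sq w₁ w₂,
      two_mul_norm_mul_le_norm_sq_add_norm_sq w₃ w₄]
  · intro h
    obtain ⟨w₁, w₂, hp, h₁₂⟩ := exists_mul_eq_and_norm_sq_add_norm_sq_eq p
      (show 2 * ‖p‖ ≤ s - 2 * ‖q‖ by linarith)
    obtain ⟨w₃, w₄, hq, h₃₄⟩ := exists_mul_eq_and_norm_sq_add_norm_sq_eq q le_rfl
    exact ⟨w₁, w₂, w₃, w₄, hp, hq, by linarith⟩

end RCLike

theorem sqrt_two_div_six_sq : (√2 / 6) ^ 2 = (1 / 18 : ℝ) := by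
  rw [div_pow, Real.sq_sqrt zero_le_two]; norm_num

/-- The Jacobian polynomial of `F` on the quadric, as a function of `u = w₃w₄`. -/
def jacobianQuadratic (u : ℂ) : ℂ := (3 * I - 3) * u ^ 2 + (2 - 4 * I) * u + I

theorem jacobianQuadratic_eq_zero_iff (u : ℂ) :
    jacobianQuadratic u = 0 ↔ ∃ δ : ℝ, δ ^ 2 = 1 / 18 ∧ u = 1 / 2 + δ - I / 6 := by
  have hcompleted_square :
      jacobianQuadratic u = (3 * I - 3) * ((u - (1 / 2 - I / 6)) ^ 2 - 1 / 18) := by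
    unfold jacobianQuadratic
    linear_combination (7 / 12 - u - I / 12) * I_sq
  have hlead : (3 * I - 3 : ℂ) ≠ 0 := by simp [Complex.ext_iff]
  have ofReal_sq_eq {δ : ℝ} (hδ : δ ^ 2 = 1 / 18) : (δ : ℂ) ^ 2 = 1 / 18 := by
    rw [← ofReal_pow, hδ]; push_cast; rfl
  rw [hcompleted_square, mul_eq_zero, or_iff_right hlead, sub_eq_zero]
  constructor
  · intro h
    rw [← ofReal_sq_eq sqrt_two_div_six_sq, sq_eq_sq_iff_eq_or_eq_neg] at h
    rcases h with h | h
    · exact ⟨√2 / 6, sqrt_two_div_six_sq, by linear_combination h⟩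
    · refine ⟨-(√2 / 6), by rw [neg_sq, sqrt_two_div_six_sq], ?_⟩
      push_cast at h ⊢
      linear_combination h
  · rintro ⟨δ, hδ, rfl⟩
    linear_combination ofReal_sq_eq hδ

theorem norm_add_norm_one_sub_of_jacobianQuadratic_eq_zero {u : ℂ}
    (hu : jacobianQuadratic u = 0) : ‖u‖ + ‖1 - u‖ = √((2 + √2) / 3) := by
  obtain ⟨δ, hδ, rfl⟩ := (jacobianQuadratic_eq_zero_iff u).1 hu
  have ha : ‖(1 / 2 + δ - I / 6 : ℂ)‖ ^ 2 = (1 / 2 + δ) ^ 2 + 1 / 36 := by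
    rw [show (1 / 2 + δ - I / 6 : ℂ) = ((1 / 2 + δ : ℝ) : ℂ) + ((-1 / 6 : ℝ) : ℂ) * I by
        push_cast; ring,
      Complex.sq_norm, normSq_add_mul_I]
    ring
  have hb : ‖1 - (1 / 2 + δ - I / 6 : ℂ)‖ ^ 2 = (1 / 2 - δ) ^ 2 + 1 / 36 := by
    rw [show 1 - (1 / 2 + δ - I / 6 : ℂ) = ((1 / 2 - δ : ℝ) : ℂ) + ((1 / 6 : ℝ) : ℂ) * I by
        push_cast; ring,
      Complex.sq_norm, normSq_add_mul_I]
    ring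
  set a := ‖(1 / 2 + δ - I / 6 : ℂ)‖
  set b := ‖1 - (1 / 2 + δ - I / 6 : ℂ)‖
  have hab : a * b = √2 / 6 := by
    rw [← sq_eq_sq₀ (by positivity) (by positivity), mul_pow, ha, hb, div_pow,
      Real.sq_sqrt zero_le_two]
    linear_combination (δ ^ 2 - 7 / 18) * hδ
  rw [← Real.sqrt_sq (by positivity : 0 ≤ a + b)]
  congr 1
  linear_combination ha + hb + 2 * hab + 2 * hδ

theorem exists_jacobianQuadratic_eq_zero : ∃ u, jacobianQuadratic u = 0 :=
  ⟨_, (jacobianQuadratic_eq_zero_iff _).2 ⟨√2 / 6, sqrt_two_div_six_sq, rfl⟩⟩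

theorem stmt_8_general (t : ℝ) :
    (∃ w₁ w₂ w₃ w₄ : ℂ,
        w₁ * w₂ + w₃ * w₄ = 1 ∧
        ‖w₁‖ ^ 2 + ‖w₂‖ ^ 2 + ‖w₃‖ ^ 2 + ‖w₄‖ ^ 2 =
          2 * t ∧
        (3 * Complex.I - 3) * w₃ ^ 2 * w₄ ^ 2 + (2 - 4 * Complex.I) * (w₃ * w₄) + Complex.I = 0) ↔
      Real.sqrt ((2 + Real.sqrt 2) / 3) ≤ t := by
  have hJ (w₃ w₄ : ℂ) : (3 * I - 3) * w₃ ^ 2 * w₄ ^ 2 + (2 - 4 * I) * (w₃ * w₄) + I =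
      jacobianQuadratic (w₃ * w₄) := by
    unfold jacobianQuadratic; ring
  simp only [hJ]
  constructor
  · rintro ⟨w₁, w₂, w₃, w₄, hQ, hM, hroot⟩
    have hbound := (RCLike.exists_norm_sq_sum_eq_iff (1 - w₃ * w₄) (w₃ * w₄) (2 * t)).1
      ⟨w₁, w₂, w₃, w₄, by linear_combination hQ, rfl, hM⟩
    linarith [norm_add_norm_one_sub_of_jacobianQuadratic_eq_zero hroot]
  · intro ht
    obtain ⟨u, hroot⟩ := exists_jacobianQuadratic_eq_zero
    have hnorm := norm_add_norm_one_sub_of_jacobianQuadratic_eq_zero hroot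
    obtain ⟨w₁, w₂, w₃, w₄, hp, rfl, hM⟩ :=
      (RCLike.exists_norm_sq_sum_eq_iff (1 - u) u (2 * t)).2 (by linarith)
    exact ⟨w₁, w₂, w₃, w₄, by rw [hp]; ring, hM, hroot⟩

/-- For `t > 1`, there is a point of `M_t³` (in the `w`-coordinates) where the
Jacobian polynomial `(3i−3)w₃²w₄² + (2−4i)w₃w₄ + i` vanishes iff `t ≥ √((2+√2)/3)`. -/
theorem stmt_8 (t : ℝ) (ht : 1 < t) :
    (∃ w₁ w₂ w₃ w₄ : ℂ,
        w₁ * w₂ + w₃ * w₄ = 1 ∧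
        ‖w₁‖ ^ 2 + ‖w₂‖ ^ 2 + ‖w₃‖ ^ 2 + ‖w₄‖ ^ 2 =
          2 * t ∧
        (3 * Complex.I - 3) * w₃ ^ 2 * w₄ ^ 2 + (2 - 4 * Complex.I) * (w₃ * w₄) + Complex.I = 0) ↔
      Real.sqrt ((2 + Real.sqrt 2) / 3) ≤ t :=
  stmt_8_general t
end

section
/- Let W = (w₁,w₂,w₃,w₄) and Ŵ = (ŵ₁,ŵ₂,ŵ₃,ŵ₄) be points of ℂ⁴ with w₁w₂ + w₃w₄ = 1 and ŵ₁ŵ₂ + ŵ₃ŵ₄ = 1, and suppose F(W) = F(Ŵ). If w₁ = 0 or w₃ = 0, then W = Ŵ. -/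
open Complex

/-- If `W = (w₁,w₂,w₃,w₄)` and `W' = (w₁',w₂',w₃',w₄')` lie on the quadric
`w₁w₂ + w₃w₄ = 1` and `F(W) = F(W')` where
`F(w) = (w₁, w₃, w₂w₃w₄² + i·w₁w₂²w₄)`, and if `w₁ = 0` or `w₃ = 0`, then `W = W'`. -/
theorem stmt_11 (w₁ w₂ w₃ w₄ w₁' w₂' w₃' w₄' : ℂ)
    (hQ : w₁ * w₂ + w₃ * w₄ = 1) (hQ' : w₁' * w₂' + w₃' * w₄' = 1)
    (hF : (w₁, w₃, w₂ * w₃ * w₄ ^ 2 + Complex.I * w₁ * w₂ ^ 2 * w₄) =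
      (w₁', w₃', w₂' * w₃' * w₄' ^ 2 + Complex.I * w₁' * w₂' ^ 2 * w₄'))
    (h : w₁ = 0 ∨ w₃ = 0) :
    (w₁, w₂, w₃, w₄) = (w₁', w₂', w₃', w₄') := by
  obtain ⟨h1, h3, hT⟩ : w₁ = w₁' ∧ w₃ = w₃' ∧
      w₂ * w₃ * w₄ ^ 2 + Complex.I * w₁ * w₂ ^ 2 * w₄ =
        w₂' * w₃' * w₄' ^ 2 + Complex.I * w₁' * w₂' ^ 2 * w₄' := by
    simpa [Prod.ext_iff] using hF
  rw [← h1, ← h3] at hQ' hT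
  rcases h with h0 | h0
  · -- w₁ = 0
    rw [h0] at hQ hQ' hT
    simp only [zero_mul, zero_add, mul_zero] at hQ hQ' hT
    have h3ne : w₃ ≠ 0 := fun hc => by simp [hc] at hQ
    have h4ne : w₄ ≠ 0 := fun hc => by simp [hc] at hQ
    have h4 : w₄ = w₄' := mul_left_cancel₀ h3ne (by rw [hQ, hQ'])
    rw [← h4] at hT
    have h2 : w₂ = w₂' := by
      have := mul_right_cancel₀ (b := w₃ * w₄ ^ 2)
        (mul_ne_zero h3ne (pow_ne_zero 2 h4ne)) (a := w₂) (c := w₂') (by linear_combination hT)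
      exact this
    exact Prod.ext h1 (Prod.ext h2 (Prod.ext h3 h4))
  · -- w₃ = 0
    rw [h0] at hQ hQ' hT
    simp only [mul_zero, zero_mul, add_zero, zero_add] at hQ hQ' hT
    have h1ne : w₁ ≠ 0 := fun hc => by simp [hc] at hQ
    have h2 : w₂ = w₂' := mul_left_cancel₀ h1ne (by rw [hQ, hQ'])
    have h2ne : w₂ ≠ 0 := fun hc => by simp [hc] at hQ
    rw [← h2] at hT
    have h4 : w₄ = w₄' :=
      mul_left_cancel₀ (a := Complex.I * w₁ * w₂ ^ 2)
        (by simp [Complex.I_ne_zero, h1ne, h2ne]) (by linear_combination hT)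
    exact Prod.ext h1 (Prod.ext h2 (Prod.ext h3 h4))
end

section
/- For every point p ∈ ℂ³, the fiber {w ∈ ℂ⁴ : w₁w₂ + w₃w₄ = 1 and F(w) = p} of the restriction of F to the quadric contains at most 3 points. -/
open Complex Polynomial

/-- Every fiber of `F(w) = (w₁, w₃, w₂w₃w₄² + i·w₁w₂²w₄)` restricted to the
quadric `w₁w₂ + w₃w₄ = 1` contains at most 3 points. -/
theorem stmt_12 (p : ℂ × ℂ × ℂ) :
    {w : ℂ × ℂ × ℂ × ℂ | w.1 * w.2.1 + w.2.2.1 * w.2.2.2 = 1 ∧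
      (w.1, w.2.2.1,
        w.2.1 * w.2.2.1 * w.2.2.2 ^ 2 + Complex.I * w.1 * w.2.1 ^ 2 * w.2.2.2) = p}.encard ≤ 3 := by
  obtain ⟨a, b, c⟩ := p
  set S : Set (ℂ × ℂ × ℂ × ℂ) :=
    {w : ℂ × ℂ × ℂ × ℂ | w.1 * w.2.1 + w.2.2.1 * w.2.2.2 = 1 ∧
      (w.1, w.2.2.1,
        w.2.1 * w.2.2.1 * w.2.2.2 ^ 2 + Complex.I * w.1 * w.2.1 ^ 2 * w.2.2.2) = (a, b, c)}
    with hS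
  by_cases hb : b = 0
  · -- the fiber is a subsingleton
    have hsub : ∀ u ∈ S, ∀ v ∈ S, u = v := by
      rintro ⟨w1, w2, w3, w4⟩ ⟨hq, hf⟩ ⟨v1, v2, v3, v4⟩ ⟨hq', hf'⟩
      simp only [Prod.mk.injEq] at hf hf' ⊢
      obtain ⟨h1, h3, hc⟩ := hf
      obtain ⟨h1', h3', hc'⟩ := hf'
      simp only at hq hq' hc hc'
      rw [h3, hb, zero_mul, add_zero] at hq
      rw [h3', hb, zero_mul, add_zero] at hq'
      rw [h3, hb, mul_zero, zero_mul, zero_add] at hc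
      rw [h3', hb, mul_zero, zero_mul, zero_add] at hc'
      have ha : w1 ≠ 0 := by
        intro h; rw [h, zero_mul] at hq; exact one_ne_zero hq.symm
      have hw2ne : w2 ≠ 0 := by
        intro h; rw [h, mul_zero] at hq; exact one_ne_zero hq.symm
      have hw1 : w1 = v1 := h1.trans h1'.symm
      have hw2 : w2 = v2 := by
        rw [← hw1] at hq'
        exact mul_left_cancel₀ ha (hq.trans hq'.symm)
      have hw4 : w4 = v4 := by
        rw [← hw1, ← hw2] at hc'
        have hne : Complex.I * w1 * w2 ^ 2 ≠ 0 := by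
          simp [Complex.I_ne_zero, ha, hw2ne]
        exact mul_left_cancel₀ hne (hc.trans hc'.symm)
      exact ⟨hw1, hw2, h3.trans h3'.symm, hw4⟩
    calc S.encard ≤ 1 := Set.encard_le_one_iff.mpr fun u v hu hv => hsub u hu v hv
      _ ≤ 3 := by norm_num
  · -- the fiber injects into the roots of a cubic
    set P : ℂ[X] := C (-(Complex.I - 1) * a ^ 2) * X ^ 3 + C ((Complex.I - 2) * a) * X ^ 2
        + X - C (c * b) with hP
    have hP0 : P ≠ 0 := by
      intro h
      have h1 : P.coeff 1 = 0 := by rw [h]; simp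
      rw [hP] at h1
      simp only [coeff_add, coeff_sub, coeff_C_mul, coeff_X_pow, coeff_C, coeff_X_one] at h1
      norm_num at h1
    have hdeg : P.natDegree ≤ 3 := by
      rw [hP]; compute_degree
    have hinj : Set.InjOn (fun w : ℂ × ℂ × ℂ × ℂ => w.2.1) S := by
      rintro ⟨w1, w2, w3, w4⟩ ⟨hq, hf⟩ ⟨v1, v2, v3, v4⟩ ⟨hq', hf'⟩ hxy
      simp only [Prod.mk.injEq] at hf hf' ⊢
      obtain ⟨h1, h3, hc⟩ := hf
      obtain ⟨h1', h3', hc'⟩ := hf'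
      simp only at hq hq' hxy
      have hw1 : w1 = v1 := h1.trans h1'.symm
      have hw3 : w3 = v3 := h3.trans h3'.symm
      have hb3 : w3 ≠ 0 := by rw [h3]; exact hb
      have hw4 : w4 = v4 := by
        rw [← hw1, ← hw3, ← hxy] at hq'
        exact mul_left_cancel₀ hb3 (add_left_cancel (hq.trans hq'.symm))
      exact ⟨hw1, hxy, hw3, hw4⟩
    have himg : (fun w : ℂ × ℂ × ℂ × ℂ => w.2.1) '' S ⊆ ↑P.roots.toFinset := by
      rintro x ⟨⟨w1, w2, w3, w4⟩, ⟨hq, hf⟩, rfl⟩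
      simp only [Prod.mk.injEq] at hf
      obtain ⟨h1, h3, hc⟩ := hf
      simp only at hq hc ⊢
      rw [h1, h3] at hq hc
      rw [Finset.mem_coe, Multiset.mem_toFinset, mem_roots hP0]
      show P.eval w2 = 0
      rw [hP]
      simp only [eval_sub, eval_add, eval_mul, eval_pow, eval_C, eval_X]
      linear_combination (-(w2 * (b * w4 + 1 - a * w2)) - Complex.I * a * w2 ^ 2) * hq
        + b * hc
    calc S.encard = ((fun w : ℂ × ℂ × ℂ × ℂ => w.2.1) '' S).encard := (hinj.encard_image).symm
      _ ≤ (↑P.roots.toFinset : Set ℂ).encard := Set.encard_mono himg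
      _ = P.roots.toFinset.card := Set.encard_coe_eq_coe_finsetCard _
      _ ≤ (P.natDegree : ℕ∞) := by
          exact_mod_cast le_trans (Multiset.toFinset_card_le _) P.card_roots'
      _ ≤ 3 := by exact_mod_cast hdeg
end

section
/- For every real s ≥ 0, one has (4 − 8s)² + (24s² − 24s + 4)² ≥ 16/9. Equivalently, for every w₃ ∈ ℂ, the modulus of −8|w₃|² + 4 + i·(24|w₃|⁴ − 24|w₃|² + 4) is at least 4/3. -/
open Complex

/-
With `u = (1 - 2s)²` one has `s² - s = (u - 1)/4`, so the sum of squares becomes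
`4 (9u² - 2u + 1) = 4 (3u - 1/3)² + 32/9`. Hence it is at least `32/9 ≥ 16/9` for every real `s`,
and the complex statement is the case `s = ‖w₃‖²`, since `‖a + b i‖ = √(a² + b²)`.
-/

lemma sq_add_sq_quadratic_eq (s : ℝ) :
    (4 - 8 * s) ^ 2 + (24 * s ^ 2 - 24 * s + 4) ^ 2 =
      4 * (3 * (1 - 2 * s) ^ 2 - 1 / 3) ^ 2 + 32 / 9 := by
  ring

lemma sixteen_ninths_le_sq_add_sq_quadratic (s : ℝ) :
    16 / 9 ≤ (4 - 8 * s) ^ 2 + (24 * s ^ 2 - 24 * s + 4) ^ 2 := by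
  rw [sq_add_sq_quadratic_eq]
  nlinarith [sq_nonneg (3 * (1 - 2 * s) ^ 2 - 1 / 3)]

/-- For every real `s ≥ 0`, `(4 − 8s)² + (24s² − 24s + 4)² ≥ 16/9`;
equivalently, for every `w₃ ∈ ℂ` the modulus of
`−8|w₃|² + 4 + i(24|w₃|⁴ − 24|w₃|² + 4)` is at least `4/3`. -/
theorem stmt_15 :
    (∀ s : ℝ, 0 ≤ s → 16 / 9 ≤ (4 - 8 * s) ^ 2 + (24 * s ^ 2 - 24 * s + 4) ^ 2) ∧
    (∀ w₃ : ℂ, 4 / 3 ≤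
      ‖((-8 * ‖w₃‖ ^ 2 + 4 : ℝ) : ℂ) +
        Complex.I * ((24 * ‖w₃‖ ^ 4 - 24 * ‖w₃‖ ^ 2 + 4 : ℝ) : ℂ)‖) := by
  refine ⟨fun s _ => sixteen_ninths_le_sq_add_sq_quadratic s, fun w₃ => ?_⟩
  rw [mul_comm I, norm_add_mul_I, Real.le_sqrt' (by norm_num)]
  convert sixteen_ninths_le_sq_add_sq_quadratic (‖w₃‖ ^ 2) using 1 <;> ring
end

section
/- Let ε := √2 · 10⁻³. Suppose W = (w₁,w₂,w₃,w₄) and Ŵ = (ŵ₁,ŵ₂,ŵ₃,ŵ₄) are points of ℂ⁴ satisfying w₁w₂ + w₃w₄ = 1 and ŵ₁ŵ₂ + ŵ₃ŵ₄ = 1, with |w₂ − conj(w₁)| < ε, |w₄ − conj(w₃)| < ε, |ŵ₂ − conj(ŵ₁)| < ε, |ŵ₄ − conj(ŵ₃)| < ε. If F(W) = F(Ŵ), then W = Ŵ. That is, F is injective on the neighborhood U_ε of S³ in the quadric. -/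
/-!
On the quadric, `w₁ w₃` times the third component of `F` is the cubic `φ(p) = p(1 - p)(1 + (i - 1)p)`
of `p = w₁ w₂` (because `w₃ w₄ = 1 - p`). So if `w₁ w₃ ≠ 0`, `F(W) = F(Ŵ)` forces `φ(p) = φ(p̂)`;
the cases `w₁ = 0` and `w₃ = 0` are elementary. Near `S³`, both `p` and `p̂` lie within `|w₁| ε` of
the real number `t = |w₁|² ≤ 1 + O(ε)`, so the divided difference `(φ(p) - φ(p̂))/(p - p̂)` is a
small perturbation of `φ'(t)`, and `|φ'(t)|² = 1/9 + 2/9 (9t² - 9t + 2)² ≥ 1/9` on the real line.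
Hence `p = p̂`, and with `w₁, w₃` fixed this determines `w₂` and `w₄`.
-/

open Complex ComplexConjugate

noncomputable def cubicOnQuadric (p : ℂ) : ℂ := p * (1 - p) * (1 + (I - 1) * p)

noncomputable def cubicOnQuadricSlope (p p' : ℂ) : ℂ :=
  1 + (I - 2) * (p + p') - (I - 1) * (p ^ 2 + p * p' + p' ^ 2)

lemma mul_thirdComponent_eq_cubicOnQuadric {w₁ w₂ w₃ w₄ : ℂ} (hQ : w₁ * w₂ + w₃ * w₄ = 1) :
    w₁ * w₃ * (w₂ * w₃ * w₄ ^ 2 + I * w₁ * w₂ ^ 2 * w₄) = cubicOnQuadric (w₁ * w₂) := by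
  have hq : w₃ * w₄ = 1 - w₁ * w₂ := by linear_combination hQ
  unfold cubicOnQuadric
  linear_combination (w₁ * w₂ * (w₃ * w₄ + 1 - w₁ * w₂) + I * (w₁ * w₂) ^ 2) * hq

lemma cubicOnQuadric_sub (p p' : ℂ) :
    cubicOnQuadric p - cubicOnQuadric p' = (p - p') * cubicOnQuadricSlope p p' := by
  unfold cubicOnQuadric cubicOnQuadricSlope
  ring

lemma one_third_le_norm_cubicOnQuadricSlope_ofReal (t : ℝ) :
    1 / 3 ≤ ‖cubicOnQuadricSlope t t‖ := by
  have h : cubicOnQuadricSlope t t =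
      ((1 - 4 * t + 3 * t ^ 2 : ℝ) : ℂ) + ((2 * t - 3 * t ^ 2 : ℝ) : ℂ) * I := by
    unfold cubicOnQuadricSlope
    push_cast
    ring
  have hsq : ‖cubicOnQuadricSlope t t‖ ^ 2 = 1 / 9 + 2 / 9 * (9 * t ^ 2 - 9 * t + 2) ^ 2 := by
    rw [Complex.sq_norm, h, Complex.normSq_add_mul_I]
    ring
  nlinarith [sq_nonneg (9 * t ^ 2 - 9 * t + 2), norm_nonneg (cubicOnQuadricSlope t t)]

lemma norm_cubicOnQuadricSlope_sub_le (t : ℝ) (a b : ℂ) :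
    ‖cubicOnQuadricSlope (t + a) (t + b) - cubicOnQuadricSlope t t‖ ≤
      (‖a‖ + ‖b‖) * (3 + 6 * |t|) + 2 * (‖a‖ ^ 2 + ‖a‖ * ‖b‖ + ‖b‖ ^ 2) := by
  have h : cubicOnQuadricSlope (t + a) (t + b) - cubicOnQuadricSlope t t =
      (a + b) * ((I - 2) - 3 * t * (I - 1)) - (I - 1) * (a ^ 2 + a * b + b ^ 2) := by
    unfold cubicOnQuadricSlope
    ring
  have hI2 : ‖I - 2‖ ≤ 3 := (norm_sub_le _ _).trans_eq (by norm_num)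
  have hI1 : ‖I - 1‖ ≤ 2 := (norm_sub_le _ _).trans_eq (by norm_num)
  have hlin : ‖(I - 2) - 3 * t * (I - 1)‖ ≤ 3 + 6 * |t| := by
    calc ‖(I - 2) - 3 * t * (I - 1)‖ ≤ ‖I - 2‖ + 3 * |t| * ‖I - 1‖ := by
          refine (norm_sub_le _ _).trans_eq ?_
          simp
      _ ≤ 3 + 6 * |t| := by nlinarith [abs_nonneg t]
  have hquad : ‖a ^ 2 + a * b + b ^ 2‖ ≤ ‖a‖ ^ 2 + ‖a‖ * ‖b‖ + ‖b‖ ^ 2 := by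
    refine (norm_add₃_le).trans ?_
    simp
  rw [h]
  calc _ ≤ ‖a + b‖ * ‖(I - 2) - 3 * t * (I - 1)‖ + ‖I - 1‖ * ‖a ^ 2 + a * b + b ^ 2‖ := by
        refine (norm_sub_le _ _).trans_eq ?_
        rw [norm_mul, norm_mul]
    _ ≤ _ := by
        gcongr
        · exact norm_add_le _ _

lemma cubicOnQuadricSlope_ne_zero {t : ℝ} {p p' : ℂ} (ht : |t| ≤ 21 / 20)
    (hp : ‖p - t‖ ≤ 1 / 60) (hp' : ‖p' - t‖ ≤ 1 / 60) : cubicOnQuadricSlope p p' ≠ 0 := by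
  intro h0
  have hpert := norm_cubicOnQuadricSlope_sub_le t (p - t) (p' - t)
  simp only [add_sub_cancel, h0, zero_sub, norm_neg] at hpert
  have hlow := one_third_le_norm_cubicOnQuadricSlope_ofReal t
  nlinarith [norm_nonneg (p - t), norm_nonneg (p' - t), abs_nonneg t,
    mul_le_mul hp hp' (norm_nonneg _) (by norm_num)]

lemma norm_mul_sub_normSq (w z : ℂ) : ‖w * z - normSq w‖ = ‖w‖ * ‖z - conj w‖ := by
  rw [← norm_mul, mul_sub, Complex.mul_conj]

lemma norm_le_of_quadric {w₁ w₂ w₃ w₄ : ℂ} {ε : ℝ} (hQ : w₁ * w₂ + w₃ * w₄ = 1)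
    (h₁ : ‖w₂ - conj w₁‖ ≤ ε) (h₃ : ‖w₄ - conj w₃‖ ≤ ε) (hε : ε ≤ 1 / 100) :
    ‖w₁‖ ≤ 101 / 100 := by
  have hsum : ((normSq w₁ + normSq w₃ : ℝ) : ℂ) =
      1 - (w₁ * w₂ - normSq w₁) - (w₃ * w₄ - normSq w₃) := by
    push_cast
    linear_combination hQ
  have hle : ‖w₁‖ ^ 2 + ‖w₃‖ ^ 2 ≤ 1 + ‖w₁‖ * ε + ‖w₃‖ * ε := by
    calc ‖w₁‖ ^ 2 + ‖w₃‖ ^ 2 = ‖((normSq w₁ + normSq w₃ : ℝ) : ℂ)‖ := by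
          rw [Complex.norm_real, Real.norm_of_nonneg (add_nonneg (normSq_nonneg _) (normSq_nonneg _)), Complex.sq_norm,
            Complex.sq_norm]
      _ ≤ ‖(1 : ℂ)‖ + ‖w₁ * w₂ - normSq w₁‖ + ‖w₃ * w₄ - normSq w₃‖ := by
          rw [hsum]
          exact (norm_sub_le _ _).trans (add_le_add_left (norm_sub_le _ _) _)
      _ ≤ 1 + ‖w₁‖ * ε + ‖w₃‖ * ε := by
          rw [norm_one, norm_mul_sub_normSq, norm_mul_sub_normSq]
          gcongr
  have hε0 : 0 ≤ ε := (norm_nonneg _).trans h₁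
  nlinarith [norm_nonneg w₁, sq_nonneg (‖w₃‖ - ε / 2)]

lemma mul_eq_mul_of_thirdComponent_eq {w₁ w₂ w₃ w₄ w₂' w₄' : ℂ} {ε : ℝ}
    (hQ : w₁ * w₂ + w₃ * w₄ = 1) (hQ' : w₁ * w₂' + w₃ * w₄' = 1)
    (h₂ : ‖w₂ - conj w₁‖ ≤ ε) (h₄ : ‖w₄ - conj w₃‖ ≤ ε) (h₂' : ‖w₂' - conj w₁‖ ≤ ε)
    (hε : ε ≤ 1 / 100)
    (hG : w₂ * w₃ * w₄ ^ 2 + I * w₁ * w₂ ^ 2 * w₄ = w₂' * w₃ * w₄' ^ 2 + I * w₁ * w₂' ^ 2 * w₄') :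
    w₁ * w₂ = w₁ * w₂' := by
  by_cases hw₁ : w₁ = 0
  · simp [hw₁]
  by_cases hw₃ : w₃ = 0
  · simp only [hw₃, zero_mul, add_zero] at hQ hQ'
    rw [hQ, hQ']
  have hcubic : cubicOnQuadric (w₁ * w₂) - cubicOnQuadric (w₁ * w₂') = 0 := by
    rw [← mul_thirdComponent_eq_cubicOnQuadric hQ, ← mul_thirdComponent_eq_cubicOnQuadric hQ',
      hG, sub_self]
  have hw₁_le := norm_le_of_quadric hQ h₂ h₄ hε
  have ht : |normSq w₁| ≤ 21 / 20 := by
    rw [abs_of_nonneg (normSq_nonneg _), ← Complex.sq_norm]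
    nlinarith [norm_nonneg w₁]
  have hclose : ∀ z, ‖z - conj w₁‖ ≤ ε → ‖w₁ * z - normSq w₁‖ ≤ 1 / 60 := by
    intro z hz
    rw [norm_mul_sub_normSq]
    nlinarith [norm_nonneg w₁, norm_nonneg (z - conj w₁)]
  have hslope := cubicOnQuadricSlope_ne_zero ht (hclose _ h₂) (hclose _ h₂')
  rw [cubicOnQuadric_sub] at hcubic
  exact sub_eq_zero.mp ((mul_eq_zero.mp hcubic).resolve_right hslope)

lemma eq_of_mul_eq_of_thirdComponent_eq {w₁ w₂ w₃ w₄ w₂' w₄' : ℂ}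
    (hQ : w₁ * w₂ + w₃ * w₄ = 1) (hQ' : w₁ * w₂' + w₃ * w₄' = 1) (hp : w₁ * w₂ = w₁ * w₂')
    (hG : w₂ * w₃ * w₄ ^ 2 + I * w₁ * w₂ ^ 2 * w₄ = w₂' * w₃ * w₄' ^ 2 + I * w₁ * w₂' ^ 2 * w₄') :
    w₂ = w₂' ∧ w₄ = w₄' := by
  have hq : w₃ * w₄ = w₃ * w₄' := by linear_combination hQ - hQ' - hp
  by_cases hw₁ : w₁ = 0
  · simp only [hw₁, zero_mul, zero_add] at hQ hG
    have hw₃ : w₃ ≠ 0 := left_ne_zero_of_mul_eq_one hQ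
    have hw₄ : w₄ ≠ 0 := right_ne_zero_of_mul_eq_one hQ
    have h₄ : w₄ = w₄' := mul_left_cancel₀ hw₃ hq
    subst h₄
    exact ⟨mul_right_cancel₀ (mul_ne_zero hw₃ (pow_ne_zero 2 hw₄)) (by linear_combination hG), rfl⟩
  have h₂ : w₂ = w₂' := mul_left_cancel₀ hw₁ hp
  subst h₂
  by_cases hw₃ : w₃ = 0
  · simp only [hw₃, mul_zero, zero_mul, add_zero, zero_add] at hQ hG
    have hw₂ : w₂ ≠ 0 := right_ne_zero_of_mul_eq_one hQ
    have hG' : I * w₁ * w₂ ^ 2 * w₄ = I * w₁ * w₂ ^ 2 * w₄' := by linear_combination hG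
    exact ⟨rfl, mul_left_cancel₀ (by simp [I_ne_zero, hw₁, hw₂]) hG'⟩
  exact ⟨rfl, mul_left_cancel₀ hw₃ hq⟩

lemma sqrt_two_mul_ten_zpow_neg_three_le : Real.sqrt 2 * 10 ^ (-3 : ℤ) ≤ 1 / 100 := by
  have h : Real.sqrt 2 ≤ 2 := by
    rw [Real.sqrt_le_left (by norm_num)]
    norm_num
  norm_num
  linarith

theorem stmt_16_general (w₁ w₂ w₃ w₄ w₁' w₂' w₃' w₄' : ℂ)
    (hQ : w₁ * w₂ + w₃ * w₄ = 1) (hQ' : w₁' * w₂' + w₃' * w₄' = 1)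
    (hμ : ‖w₂ - starRingEnd ℂ w₁‖ < Real.sqrt 2 * 10 ^ (-3 : ℤ))
    (hη : ‖w₄ - starRingEnd ℂ w₃‖ < Real.sqrt 2 * 10 ^ (-3 : ℤ))
    (hμ' : ‖w₂' - starRingEnd ℂ w₁'‖ < Real.sqrt 2 * 10 ^ (-3 : ℤ))
    (hF : (w₁, w₃, w₂ * w₃ * w₄ ^ 2 + Complex.I * w₁ * w₂ ^ 2 * w₄) =
      (w₁', w₃', w₂' * w₃' * w₄' ^ 2 + Complex.I * w₁' * w₂' ^ 2 * w₄')) :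
    (w₁, w₂, w₃, w₄) = (w₁', w₂', w₃', w₄') := by
  simp only [Prod.mk.injEq] at hF
  obtain ⟨rfl, rfl, hG⟩ := hF
  have hp := mul_eq_mul_of_thirdComponent_eq hQ hQ' hμ.le hη.le hμ'.le
    sqrt_two_mul_ten_zpow_neg_three_le hG
  obtain ⟨rfl, rfl⟩ := eq_of_mul_eq_of_thirdComponent_eq hQ hQ' hp hG
  rfl

/-- With `ε = √2·10⁻³`, the map `F(w) = (w₁, w₃, w₂w₃w₄² + i·w₁w₂²w₄)` is
injective on the neighborhood `U_ε = {w ∈ Q³ : |w₂ − conj w₁| < ε, |w₄ − conj w₃| < ε}`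
of `S³` in the quadric `Q³ = {w₁w₂ + w₃w₄ = 1}`. -/
theorem stmt_16 (w₁ w₂ w₃ w₄ w₁' w₂' w₃' w₄' : ℂ)
    (hQ : w₁ * w₂ + w₃ * w₄ = 1) (hQ' : w₁' * w₂' + w₃' * w₄' = 1)
    (hμ : ‖w₂ - starRingEnd ℂ w₁‖ < Real.sqrt 2 * 10 ^ (-3 : ℤ))
    (hη : ‖w₄ - starRingEnd ℂ w₃‖ < Real.sqrt 2 * 10 ^ (-3 : ℤ))
    (hμ' : ‖w₂' - starRingEnd ℂ w₁'‖ < Real.sqrt 2 * 10 ^ (-3 : ℤ))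
    (hη' : ‖w₄' - starRingEnd ℂ w₃'‖ < Real.sqrt 2 * 10 ^ (-3 : ℤ))
    (hF : (w₁, w₃, w₂ * w₃ * w₄ ^ 2 + Complex.I * w₁ * w₂ ^ 2 * w₄) =
      (w₁', w₃', w₂' * w₃' * w₄' ^ 2 + Complex.I * w₁' * w₂' ^ 2 * w₄')) :
    (w₁, w₂, w₃, w₄) = (w₁', w₂', w₃', w₄') :=
  stmt_16_general w₁ w₂ w₃ w₄ w₁' w₂' w₃' w₄' hQ hQ' hμ hη hμ' hF
end

section
/- For every t with 1 < t < 1 + 10⁻⁶, the map F is injective on M_t³; that is, if W and Ŵ are points of ℂ⁴ with w₁w₂ + w₃w₄ = 1, ŵ₁ŵ₂ + ŵ₃ŵ₄ = 1, |w₁|² + |w₂|² + |w₃|² + |w₄|² = 2t, |ŵ₁|² + |ŵ₂|² + |ŵ₃|² + |ŵ₄|² = 2t, and F(W) = F(Ŵ), then W = Ŵ. -/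
/-!
Since `F` remembers `w₁ = a` and `w₃ = c`, two points of `M_t³` with the same image differ only in
`(w₂, w₄)`, and the differences `(b - b', d - d')` solve a homogeneous 2×2 linear system
(the quadric equation and the third component of `F`); it suffices that its determinant
`secantDet` does not vanish. On the quadric, `‖w₂ - conj w₁‖² + ‖w₄ - conj w₃‖² = 2t - 2`, so for
`t` near `1` the determinant is a small perturbation of its value at `b = b' = conj a`,
`d = d' = conj c`, namely `2αβ - β² + i(α² - 2αβ)` with `α = |a|²`, `β = |c|²`, whose modulus is
at least `(α + β)² / √10`; and `α + β ≥ 1/(2t)` by Cauchy–Schwarz applied to `ab + cd = 1`.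
-/

open Complex ComplexConjugate

theorem norm_mul_sub_mul_le {α : Type*} [NormedRing α] (x y x' y' : α) :
    ‖x * y - x' * y'‖ ≤ ‖x‖ * ‖y - y'‖ + ‖x - x'‖ * ‖y'‖ := by
  calc ‖x * y - x' * y'‖ = ‖x * (y - y') + (x - x') * y'‖ := by noncomm_ring
    _ ≤ ‖x‖ * ‖y - y'‖ + ‖x - x'‖ * ‖y'‖ :=
      (norm_add_le _ _).trans (add_le_add (norm_mul_le _ _) (norm_mul_le _ _))

theorem eq_zero_and_eq_zero_of_mul_sub_mul_ne_zero {R : Type*} [CommRing R] [NoZeroDivisors R]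
    {a c A B u v : R} (h₁ : a * u + c * v = 0) (h₂ : A * u + B * v = 0)
    (hdet : a * B - c * A ≠ 0) : u = 0 ∧ v = 0 := by
  have hu : (a * B - c * A) * u = 0 := by linear_combination B * h₁ - c * h₂
  have hv : (a * B - c * A) * v = 0 := by linear_combination a * h₂ - A * h₁
  exact ⟨(mul_eq_zero.1 hu).resolve_left hdet, (mul_eq_zero.1 hv).resolve_left hdet⟩

theorem pow_four_le_ten_mul_sq_add_sq (α β : ℝ) :
    (α + β) ^ 4 ≤ 10 * ((2 * α * β - β ^ 2) ^ 2 + (α ^ 2 - 2 * α * β) ^ 2) := by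
  nlinarith [sq_nonneg (2 * α ^ 2 - 5 * α * β + 2 * β ^ 2)]

theorem sq_norm_sub_conj_add_sq_norm_sub_conj {a b c d : ℂ} (h : a * b + c * d = 1) :
    ‖b - conj a‖ ^ 2 + ‖d - conj c‖ ^ 2 = ‖a‖ ^ 2 + ‖b‖ ^ 2 + ‖c‖ ^ 2 + ‖d‖ ^ 2 - 2 := by
  have hre := congrArg re h
  simp only [Complex.sq_norm, normSq_sub, normSq_conj, conj_conj, add_re, one_re] at hre ⊢
  rw [mul_comm b, mul_comm d]
  linarith

theorem one_le_mul_of_mul_add_mul_eq_one {a b c d : ℂ} (h : a * b + c * d = 1) :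
    1 ≤ (‖a‖ ^ 2 + ‖c‖ ^ 2) * (‖b‖ ^ 2 + ‖d‖ ^ 2) := by
  have h₁ : 1 ≤ ‖a‖ * ‖b‖ + ‖c‖ * ‖d‖ := by
    simpa [h, norm_mul] using norm_add_le (a * b) (c * d)
  nlinarith [sq_nonneg (‖a‖ * ‖d‖ - ‖c‖ * ‖b‖), norm_nonneg a, norm_nonneg b, norm_nonneg c,
    norm_nonneg d]

/-- `a B - c A` for the linear system `a u + c v = 0`, `A u + B v = 0` solved by
`(u, v) = (b - b', d - d')` (see `eq_and_eq_of_secantDet_ne_zero`). -/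
def secantDet (a c b b' d d' : ℂ) : ℂ :=
  a * (c * b' * (d + d') + I * a * b' ^ 2) - c * (c * d ^ 2 + I * a * d * (b + b'))

theorem secantDet_conj (a c : ℂ) :
    secantDet a c (conj a) (conj a) (conj c) (conj c) =
      ((2 * normSq a * normSq c - normSq c ^ 2 : ℝ) : ℂ) +
        ((normSq a ^ 2 - 2 * normSq a * normSq c : ℝ) : ℂ) * I := by
  push_cast
  rw [← mul_conj, ← mul_conj]
  unfold secantDet
  ring

theorem pow_four_le_sq_norm_secantDet_conj (a c : ℂ) :
    (‖a‖ ^ 2 + ‖c‖ ^ 2) ^ 4 ≤ 10 * ‖secantDet a c (conj a) (conj a) (conj c) (conj c)‖ ^ 2 := by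
  simp only [secantDet_conj, Complex.sq_norm, normSq_add_mul_I]
  exact pow_four_le_ten_mul_sq_add_sq _ _

theorem norm_secantDet_sub_secantDet_conj_le {a c b b' d d' : ℂ} {R ε : ℝ}
    (ha : ‖a‖ ≤ R) (hc : ‖c‖ ≤ R) (hb' : ‖b'‖ ≤ R) (hd : ‖d‖ ≤ R)
    (hbε : ‖b - conj a‖ ≤ ε) (hb'ε : ‖b' - conj a‖ ≤ ε)
    (hdε : ‖d - conj c‖ ≤ ε) (hd'ε : ‖d' - conj c‖ ≤ ε) :
    ‖secantDet a c b b' d d' - secantDet a c (conj a) (conj a) (conj c) (conj c)‖ ≤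
      12 * R ^ 3 * ε := by
  have hR : 0 ≤ R := (norm_nonneg a).trans ha
  have term : ∀ m x y x' y' : ℂ, ‖m‖ ≤ R ^ 2 → ‖x‖ ≤ R → ‖y'‖ ≤ R → ‖x - x'‖ ≤ ε →
      ‖y - y'‖ ≤ ε → ‖m * (x * y - x' * y')‖ ≤ 2 * R ^ 3 * ε := by
    intro m x y x' y' hm hx hy' hxx' hyy'
    have hε : 0 ≤ ε := (norm_nonneg _).trans hxx'
    calc ‖m * (x * y - x' * y')‖ ≤ R ^ 2 * (R * ε + ε * R) := by
          rw [norm_mul]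
          gcongr
          exact (norm_mul_sub_mul_le x y x' y').trans (by gcongr)
      _ = 2 * R ^ 3 * ε := by ring
  have hac : ‖a * c‖ ≤ R ^ 2 := by rw [norm_mul, sq]; gcongr
  have hIac : ‖I * a * c‖ ≤ R ^ 2 := by rwa [mul_assoc, norm_mul, norm_I, one_mul]
  have hIa : ‖I * a ^ 2‖ ≤ R ^ 2 := by rw [norm_mul, norm_I, one_mul, norm_pow]; gcongr
  have hc2 : ‖c ^ 2‖ ≤ R ^ 2 := by rw [norm_pow]; gcongr
  have hca : ‖conj a‖ ≤ R := by rwa [norm_conj]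
  have hcc : ‖conj c‖ ≤ R := by rwa [norm_conj]
  calc _ = ‖(a * c * (b' * d - conj a * conj c) + a * c * (b' * d' - conj a * conj c)
          + I * a ^ 2 * (b' * b' - conj a * conj a))
        - (c ^ 2 * (d * d - conj c * conj c) + I * a * c * (d * b - conj c * conj a)
          + I * a * c * (d * b' - conj c * conj a))‖ := by congr 1; unfold secantDet; ring
    _ ≤ 12 * R ^ 3 * ε := by
      refine (norm_sub_le _ _).trans ?_
      have := norm_add₃_le (a := a * c * (b' * d - conj a * conj c))
        (b := a * c * (b' * d' - conj a * conj c)) (c := I * a ^ 2 * (b' * b' - conj a * conj a))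
      have := norm_add₃_le (a := c ^ 2 * (d * d - conj c * conj c))
        (b := I * a * c * (d * b - conj c * conj a)) (c := I * a * c * (d * b' - conj c * conj a))
      linarith [term _ _ _ _ _ hac hb' hcc hb'ε hdε, term _ _ _ _ _ hac hb' hcc hb'ε hd'ε,
        term _ _ _ _ _ hIa hb' hca hb'ε hb'ε, term _ _ _ _ _ hc2 hd hcc hdε hdε,
        term _ _ _ _ _ hIac hd hca hdε hbε, term _ _ _ _ _ hIac hd hca hdε hb'ε]

theorem eq_and_eq_of_secantDet_ne_zero {a c b b' d d' : ℂ} (hQ : a * b + c * d = 1)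
    (hQ' : a * b' + c * d' = 1)
    (hG : b * c * d ^ 2 + I * a * b ^ 2 * d = b' * c * d' ^ 2 + I * a * b' ^ 2 * d')
    (hdet : secantDet a c b b' d d' ≠ 0) : b = b' ∧ d = d' := by
  have h₁ : a * (b - b') + c * (d - d') = 0 := by linear_combination hQ - hQ'
  have h₂ : (c * d ^ 2 + I * a * d * (b + b')) * (b - b') +
      (c * b' * (d + d') + I * a * b' ^ 2) * (d - d') = 0 := by linear_combination hG
  simpa only [sub_eq_zero] using eq_zero_and_eq_zero_of_mul_sub_mul_ne_zero h₁ h₂ hdet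

theorem secantDet_ne_zero {a c b b' d d' : ℂ} (hac : 4 / 9 ≤ ‖a‖ ^ 2 + ‖c‖ ^ 2)
    (ha : ‖a‖ ≤ 3 / 2) (hc : ‖c‖ ≤ 3 / 2) (hb' : ‖b'‖ ≤ 3 / 2) (hd : ‖d‖ ≤ 3 / 2)
    (hbε : ‖b - conj a‖ ≤ 3 / 2000) (hb'ε : ‖b' - conj a‖ ≤ 3 / 2000)
    (hdε : ‖d - conj c‖ ≤ 3 / 2000) (hd'ε : ‖d' - conj c‖ ≤ 3 / 2000) :
    secantDet a c b b' d d' ≠ 0 := by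
  intro h
  have hsmall := norm_secantDet_sub_secantDet_conj_le ha hc hb' hd hbε hb'ε hdε hd'ε
  rw [h, zero_sub, norm_neg] at hsmall
  have hlarge := pow_four_le_sq_norm_secantDet_conj a c
  have : (4 / 9 : ℝ) ^ 4 ≤ (‖a‖ ^ 2 + ‖c‖ ^ 2) ^ 4 := by gcongr
  nlinarith [norm_nonneg (secantDet a c (conj a) (conj a) (conj c) (conj c))]

theorem bounds_of_mem_quadric_sphere {a b c d : ℂ} {t : ℝ} (hQ : a * b + c * d = 1)
    (hM : ‖a‖ ^ 2 + ‖b‖ ^ 2 + ‖c‖ ^ 2 + ‖d‖ ^ 2 = 2 * t) (ht : t < 1 + 10 ^ (-6 : ℤ)) :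
    ‖b - conj a‖ ≤ 3 / 2000 ∧ ‖d - conj c‖ ≤ 3 / 2000 ∧ ‖a‖ ≤ 3 / 2 ∧ ‖b‖ ≤ 3 / 2 ∧
      ‖c‖ ≤ 3 / 2 ∧ ‖d‖ ≤ 3 / 2 ∧ 4 / 9 ≤ ‖a‖ ^ 2 + ‖c‖ ^ 2 := by
  norm_num at ht
  have hconj := sq_norm_sub_conj_add_sq_norm_sub_conj hQ
  have hprod := one_le_mul_of_mul_add_mul_eq_one hQ
  have hsq : ∀ x : ℂ, ‖x‖ ^ 2 ≤ 9 / 4 → ‖x‖ ≤ 3 / 2 := fun x hx ↦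
    le_of_sq_le_sq (by linarith) (by norm_num)
  have hsmall : ∀ x : ℂ, ‖x‖ ^ 2 ≤ 2 * t - 2 → ‖x‖ ≤ 3 / 2000 := fun x hx ↦
    le_of_sq_le_sq (by linarith) (by norm_num)
  have := sq_nonneg ‖a‖; have := sq_nonneg ‖b‖; have := sq_nonneg ‖c‖; have := sq_nonneg ‖d‖
  have := sq_nonneg ‖b - conj a‖; have := sq_nonneg ‖d - conj c‖
  exact ⟨hsmall _ (by linarith), hsmall _ (by linarith), hsq _ (by linarith), hsq _ (by linarith),
    hsq _ (by linarith), hsq _ (by linarith), by nlinarith⟩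

theorem stmt_17_general (t : ℝ) (ht' : t < 1 + 10 ^ (-6 : ℤ))
    (w₁ w₂ w₃ w₄ w₁' w₂' w₃' w₄' : ℂ)
    (hQ : w₁ * w₂ + w₃ * w₄ = 1) (hQ' : w₁' * w₂' + w₃' * w₄' = 1)
    (hM : ‖w₁‖ ^ 2 + ‖w₂‖ ^ 2 + ‖w₃‖ ^ 2 + ‖w₄‖ ^ 2 =
      2 * t)
    (hM' : ‖w₁'‖ ^ 2 + ‖w₂'‖ ^ 2 + ‖w₃'‖ ^ 2 +
      ‖w₄'‖ ^ 2 = 2 * t)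
    (hF : (w₁, w₃, w₂ * w₃ * w₄ ^ 2 + Complex.I * w₁ * w₂ ^ 2 * w₄) =
      (w₁', w₃', w₂' * w₃' * w₄' ^ 2 + Complex.I * w₁' * w₂' ^ 2 * w₄')) :
    (w₁, w₂, w₃, w₄) = (w₁', w₂', w₃', w₄') := by
  simp only [Prod.mk.injEq] at hF
  obtain ⟨rfl, rfl, hG⟩ := hF
  obtain ⟨hb, hd, ha, -, hc, hdR, hac⟩ := bounds_of_mem_quadric_sphere hQ hM ht'
  obtain ⟨hb', hd', -, hb'R, -, -, -⟩ := bounds_of_mem_quadric_sphere hQ' hM' ht'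
  obtain ⟨rfl, rfl⟩ := eq_and_eq_of_secantDet_ne_zero hQ hQ' hG
    (secantDet_ne_zero hac ha hc hb'R hdR hb hb' hd hd')
  rfl

/-- For `1 < t < 1 + 10⁻⁶`, the map `F(w) = (w₁, w₃, w₂w₃w₄² + i·w₁w₂²w₄)`
is injective on `M_t³ = {w : w₁w₂ + w₃w₄ = 1, |w₁|² + |w₂|² + |w₃|² + |w₄|² = 2t}`. -/
theorem stmt_17 (t : ℝ) (ht : 1 < t) (ht' : t < 1 + 10 ^ (-6 : ℤ))
    (w₁ w₂ w₃ w₄ w₁' w₂' w₃' w₄' : ℂ)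
    (hQ : w₁ * w₂ + w₃ * w₄ = 1) (hQ' : w₁' * w₂' + w₃' * w₄' = 1)
    (hM : ‖w₁‖ ^ 2 + ‖w₂‖ ^ 2 + ‖w₃‖ ^ 2 + ‖w₄‖ ^ 2 =
      2 * t)
    (hM' : ‖w₁'‖ ^ 2 + ‖w₂'‖ ^ 2 + ‖w₃'‖ ^ 2 +
      ‖w₄'‖ ^ 2 = 2 * t)
    (hF : (w₁, w₃, w₂ * w₃ * w₄ ^ 2 + Complex.I * w₁ * w₂ ^ 2 * w₄) =
      (w₁', w₃', w₂' * w₃' * w₄' ^ 2 + Complex.I * w₁' * w₂' ^ 2 * w₄')) :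
    (w₁, w₂, w₃, w₄) = (w₁', w₂', w₃', w₄') :=
  stmt_17_general t ht' w₁ w₂ w₃ w₄ w₁' w₂' w₃' w₄' hQ hQ' hM hM' hF
end

section
/- Let t ≥ √2. Then there exists a real u > 0 with 2u² + 1/u² = 2t, and for any such u the three points W := (u, 1/u, u, 0), W' := (u, 0, u, 1/u), W'' := (u, (1+i)/(2u), u, (1−i)/(2u)) of ℂ⁴ are pairwise distinct, each satisfies w₁w₂ + w₃w₄ = 1 and |w₁|² + |w₂|² + |w₃|² + |w₄|² = 2t, and F(W) = F(W') = F(W'') = (u, u, 0). In particular, F is not injective on M_t³ for any t ≥ √2. -/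
open Complex

/-- The holomorphic continuation of the Ahern–Rudin map in the `w`-coordinates:
`F(w₁,w₂,w₃,w₄) = (w₁, w₃, w₂w₃w₄² + i·w₁w₂²w₄)`. -/
noncomputable def ARmap (w : ℂ × ℂ × ℂ × ℂ) : ℂ × ℂ × ℂ :=
  (w.1, w.2.2.1, w.2.1 * w.2.2.1 * w.2.2.2 ^ 2 + Complex.I * w.1 * w.2.1 ^ 2 * w.2.2.2)

/-- Membership in the quadric `Q³ = {w₁w₂ + w₃w₄ = 1}`. -/
def onQuadric (w : ℂ × ℂ × ℂ × ℂ) : Prop := w.1 * w.2.1 + w.2.2.1 * w.2.2.2 = 1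

/-- `|w₁|² + |w₂|² + |w₃|² + |w₄|²`. -/
noncomputable def normSq4 (w : ℂ × ℂ × ℂ × ℂ) : ℝ :=
  ‖w.1‖ ^ 2 + ‖w.2.1‖ ^ 2 + ‖w.2.2.1‖ ^ 2 +
    ‖w.2.2.2‖ ^ 2

/-!
The third coordinate of `F` factors as `w₂w₄(w₃w₄ + i·w₁w₂)`. All three points have
`w₁ = w₃ = u`, and it vanishes at `W` and `W'` because `w₄ = 0` resp. `w₂ = 0`, and at `W''`
because there `w₄ = -i·w₂`. The quadric and sphere conditions reduce to `u(w₂ + w₄) = 1` and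
`|w₂|² + |w₄|² = 1/u²`.
-/

theorem exists_pos_two_mul_sq_add_inv_sq_eq {t : ℝ} (ht : √2 ≤ t) :
    ∃ u : ℝ, 0 < u ∧ 2 * u ^ 2 + 1 / u ^ 2 = 2 * t := by
  have hdisc : 0 ≤ t ^ 2 - 2 := by
    nlinarith [Real.sq_sqrt (zero_le_two : (0 : ℝ) ≤ 2), Real.sqrt_nonneg 2]
  set s := √(t ^ 2 - 2)
  have hts : 0 < t + s := by
    have := (Real.sqrt_pos.2 two_pos).trans_le ht
    positivity
  have hx : 0 < (t + s) / 2 := by positivity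
  -- `u²` is the larger root of `2x² - 2tx + 1`
  refine ⟨√((t + s) / 2), Real.sqrt_pos.2 hx, ?_⟩
  rw [Real.sq_sqrt hx.le]
  field_simp
  nlinarith [Real.sq_sqrt hdisc]

theorem ARmap_eq_of_mul_eq_zero {a b c d : ℂ} (h : b * d * (c * d + I * a * b) = 0) :
    ARmap (a, b, c, d) = (a, c, 0) := by
  simp only [ARmap, Prod.mk.injEq, true_and]
  linear_combination h

theorem onQuadric_of_add_eq_one_div {u b d : ℂ} (hu : u ≠ 0) (h : b + d = 1 / u) :
    onQuadric (u, b, u, d) := by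
  show u * b + u * d = 1
  rw [← mul_add, h, mul_one_div_cancel hu]

theorem normSq4_of_sq_norm_add_eq {u : ℝ} {b d : ℂ} (h : ‖b‖ ^ 2 + ‖d‖ ^ 2 = 1 / u ^ 2) :
    normSq4 (u, b, u, d) = 2 * u ^ 2 + 1 / u ^ 2 := by
  rw [← h]
  simp only [normSq4, norm_real, Real.norm_eq_abs, sq_abs]
  ring

theorem one_add_I_ne_zero : 1 + I ≠ 0 := fun h => by simpa using congrArg im h

theorem sq_norm_one_add_I : ‖1 + I‖ ^ 2 = 2 := by
  norm_num [Complex.sq_norm, normSq_apply]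

theorem sq_norm_one_sub_I : ‖1 - I‖ ^ 2 = 2 := by
  norm_num [Complex.sq_norm, normSq_apply]

theorem sq_norm_div_two_mul_ofReal {z : ℂ} (hz : ‖z‖ ^ 2 = 2) (u : ℝ) :
    ‖z / (2 * u)‖ ^ 2 = 1 / (2 * u ^ 2) := by
  rw [norm_div, div_pow, hz, norm_mul, norm_real, Real.norm_eq_abs, mul_pow, sq_abs]
  norm_num
  ring

/-- For `t ≥ √2` there exists a real `u > 0` with `2u² + 1/u² = 2t`, and for any
such `u` the three points `W = (u, 1/u, u, 0)`, `W' = (u, 0, u, 1/u)`,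
`W'' = (u, (1+i)/(2u), u, (1−i)/(2u))` are pairwise distinct, lie on the quadric, lie on
`M_t³`, and are all mapped by `F` to `(u, u, 0)`. In particular `F` is not injective on
`M_t³` for `t ≥ √2`. -/
theorem stmt_18 (t : ℝ) (ht : Real.sqrt 2 ≤ t) :
    (∃ u : ℝ, 0 < u ∧ 2 * u ^ 2 + 1 / u ^ 2 = 2 * t) ∧
    (∀ u : ℝ, 0 < u → 2 * u ^ 2 + 1 / u ^ 2 = 2 * t →
      ((u : ℂ), 1 / (u : ℂ), (u : ℂ), (0 : ℂ)) ≠ ((u : ℂ), (0 : ℂ), (u : ℂ), 1 / (u : ℂ)) ∧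
      ((u : ℂ), 1 / (u : ℂ), (u : ℂ), (0 : ℂ)) ≠
        ((u : ℂ), (1 + Complex.I) / (2 * u), (u : ℂ), (1 - Complex.I) / (2 * u)) ∧
      ((u : ℂ), (0 : ℂ), (u : ℂ), 1 / (u : ℂ)) ≠
        ((u : ℂ), (1 + Complex.I) / (2 * u), (u : ℂ), (1 - Complex.I) / (2 * u)) ∧
      onQuadric ((u : ℂ), 1 / (u : ℂ), (u : ℂ), (0 : ℂ)) ∧
      onQuadric ((u : ℂ), (0 : ℂ), (u : ℂ), 1 / (u : ℂ)) ∧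
      onQuadric ((u : ℂ), (1 + Complex.I) / (2 * u), (u : ℂ), (1 - Complex.I) / (2 * u)) ∧
      normSq4 ((u : ℂ), 1 / (u : ℂ), (u : ℂ), (0 : ℂ)) = 2 * t ∧
      normSq4 ((u : ℂ), (0 : ℂ), (u : ℂ), 1 / (u : ℂ)) = 2 * t ∧
      normSq4 ((u : ℂ), (1 + Complex.I) / (2 * u), (u : ℂ), (1 - Complex.I) / (2 * u)) = 2 * t ∧
      ARmap ((u : ℂ), 1 / (u : ℂ), (u : ℂ), (0 : ℂ)) = ((u : ℂ), (u : ℂ), (0 : ℂ)) ∧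
      ARmap ((u : ℂ), (0 : ℂ), (u : ℂ), 1 / (u : ℂ)) = ((u : ℂ), (u : ℂ), (0 : ℂ)) ∧
      ARmap ((u : ℂ), (1 + Complex.I) / (2 * u), (u : ℂ), (1 - Complex.I) / (2 * u)) =
        ((u : ℂ), (u : ℂ), (0 : ℂ))) := by
  refine ⟨exists_pos_two_mul_sq_add_inv_sq_eq ht, fun u hu hut => ?_⟩
  have hu0 : (u : ℂ) ≠ 0 := ofReal_ne_zero.2 hu.ne'
  have h2u : 2 * (u : ℂ) ≠ 0 := mul_ne_zero two_ne_zero hu0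
  have hW''₃ : (u : ℂ) * ((1 - I) / (2 * u)) + I * u * ((1 + I) / (2 * u)) = 0 := by
    linear_combination (u / (2 * u) : ℂ) * I_sq
  have hW''₂₄ : ‖(1 + I) / (2 * (u : ℂ))‖ ^ 2 + ‖(1 - I) / (2 * (u : ℂ))‖ ^ 2 = 1 / u ^ 2 := by
    rw [sq_norm_div_two_mul_ofReal sq_norm_one_add_I, sq_norm_div_two_mul_ofReal sq_norm_one_sub_I]
    ring
  refine ⟨?_, ?_, ?_, ?_, ?_, ?_, ?_, ?_, ?_, ?_, ?_, ?_⟩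
  · simp [hu0]
  · intro h
    have h₂ : 1 / (u : ℂ) = (1 + I) / (2 * u) := congrArg (·.2.1) h
    field_simp at h₂
    simpa using congrArg im h₂
  · simp [(div_ne_zero one_add_I_ne_zero h2u).symm]
  · exact onQuadric_of_add_eq_one_div hu0 (add_zero _)
  · exact onQuadric_of_add_eq_one_div hu0 (zero_add _)
  · exact onQuadric_of_add_eq_one_div hu0 (by field_simp; ring)
  · rw [normSq4_of_sq_norm_add_eq (by simp), hut]
  · rw [normSq4_of_sq_norm_add_eq (by simp), hut]
  · rw [normSq4_of_sq_norm_add_eq hW''₂₄, hut]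
  · exact ARmap_eq_of_mul_eq_zero (by simp)
  · exact ARmap_eq_of_mul_eq_zero (by simp)
  · exact ARmap_eq_of_mul_eq_zero (by rw [hW''₃, mul_zero])
end

section
/- Let t > 1. There exists a point (w₁,w₂,w₃,w₄) ∈ ℂ⁴ satisfying w₁w₂ + w₃w₄ = 1, |w₁|² + |w₂|² + |w₃|² + |w₄|² = 2t, and 6i·w₃²w₄² − (2+6i)·w₃w₄ + 1 = 0, if and only if t ≥ 2/√3. (Consequently, for t < √((2+√2)/3) < 2/√3 the discriminant of the fiber quadratic is nonzero at every point of M_t³, so every fiber of F over F(M_t³) meeting M_t³ consists of exactly three points.) -/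
/-!
Writing `z = w₃ w₄`, the discriminant vanishes exactly when `z` is a root of
`6i z² − (2+6i) z + 1`; both roots have `Im z = -1/6` and `36 (Re z)² − 36 Re z + 1 = 0`, which
forces `|z| + |1 − z| = 2/√3`. On the other hand, by AM–GM the smallest value of
`|w₁|² + |w₂|² + |w₃|² + |w₄|²` with `w₁ w₂ = 1 − z` and `w₃ w₄ = z` is `2 (|1 − z| + |z|)`,
and every larger value is attained by rescaling.
-/

open Complex

section SumOfSquares

variable {𝕜 : Type*} [RCLike 𝕜]

theorem two_norm_mul_le_norm_sq_add_norm_sq (a b : 𝕜) : 2 * ‖a * b‖ ≤ ‖a‖ ^ 2 + ‖b‖ ^ 2 := by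
  rw [norm_mul, ← mul_assoc]
  exact two_mul_le_add_sq _ _

-- Take `a = √ρ`, `b = p / √ρ` with `ρ` the larger root of `ρ² − s ρ + ‖p‖²`.
theorem exists_mul_eq_norm_sq_add_norm_sq_eq {p : 𝕜} {s : ℝ} (h : 2 * ‖p‖ ≤ s) :
    ∃ a b : 𝕜, a * b = p ∧ ‖a‖ ^ 2 + ‖b‖ ^ 2 = s := by
  have hp := norm_nonneg p
  set ρ := (s + √(s ^ 2 - 4 * ‖p‖ ^ 2)) / 2
  have hD : (√(s ^ 2 - 4 * ‖p‖ ^ 2)) ^ 2 = s ^ 2 - 4 * ‖p‖ ^ 2 := Real.sq_sqrt (by nlinarith)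
  have hρ : s / 2 ≤ ρ := by
    have := Real.sqrt_nonneg (s ^ 2 - 4 * ‖p‖ ^ 2)
    simp only [ρ]; linarith
  have hρp : ρ * (s - ρ) = ‖p‖ ^ 2 := by linear_combination -hD / 4
  have hρ0 : 0 ≤ ρ := by linarith
  refine ⟨(√ρ : 𝕜), p / (√ρ : 𝕜), ?_, ?_⟩
  · rcases hρ0.eq_or_lt with h0 | h0
    · have : p = 0 := by rw [← norm_eq_zero]; nlinarith
      simp [this]
    · exact mul_div_cancel₀ p (by simpa using (Real.sqrt_pos.mpr h0).ne')
  · rw [norm_div, RCLike.norm_ofReal, abs_of_nonneg (Real.sqrt_nonneg ρ), div_pow,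
      Real.sq_sqrt hρ0]
    rcases hρ0.eq_or_lt with h0 | h0
    · rw [← h0] at hρ ⊢; simp only [div_zero, add_zero]; nlinarith
    · field_simp; linear_combination -hρp

theorem exists_two_products_iff (p q : 𝕜) (s : ℝ) :
    (∃ a b c d : 𝕜, a * b = p ∧ c * d = q ∧ ‖a‖ ^ 2 + ‖b‖ ^ 2 + ‖c‖ ^ 2 + ‖d‖ ^ 2 = s) ↔
      2 * (‖p‖ + ‖q‖) ≤ s := by
  constructor
  · rintro ⟨a, b, c, d, rfl, rfl, rfl⟩
    linarith [two_norm_mul_le_norm_sq_add_norm_sq a b, two_norm_mul_le_norm_sq_add_norm_sq c d]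
  · intro h
    obtain ⟨a, b, rfl, hab⟩ :=
      exists_mul_eq_norm_sq_add_norm_sq_eq (p := p) (s := s - 2 * ‖q‖) (by linarith)
    obtain ⟨c, d, rfl, hcd⟩ := exists_mul_eq_norm_sq_add_norm_sq_eq (le_refl (2 * ‖q‖))
    exact ⟨a, b, c, d, rfl, rfl, by linarith⟩

theorem exists_mul_add_mul_eq_one_iff (P : 𝕜 → Prop) (s : ℝ) :
    (∃ a b c d : 𝕜, a * b + c * d = 1 ∧ ‖a‖ ^ 2 + ‖b‖ ^ 2 + ‖c‖ ^ 2 + ‖d‖ ^ 2 = s ∧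
      P (c * d)) ↔ ∃ z, P z ∧ 2 * (‖1 - z‖ + ‖z‖) ≤ s := by
  simp only [← exists_two_products_iff]
  constructor
  · rintro ⟨a, b, c, d, h, hs, hP⟩
    exact ⟨c * d, hP, a, b, c, d, eq_sub_of_add_eq h, rfl, hs⟩
  · rintro ⟨_, hP, a, b, c, d, hab, rfl, hs⟩
    exact ⟨a, b, c, d, by rw [hab, sub_add_cancel], hs, hP⟩

end SumOfSquares

def fiberDiscr (z : ℂ) : ℂ := 6 * I * z ^ 2 - (2 + 6 * I) * z + 1

theorem exists_fiberDiscr_eq_zero : ∃ z, fiberDiscr z = 0 := by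
  obtain ⟨z, hz⟩ := exists_quadratic_eq_zero (a := 6 * I) (b := -(2 + 6 * I)) (c := 1)
    (by simp) (IsAlgClosed.exists_eq_mul_self _)
  exact ⟨z, by rw [fiberDiscr]; linear_combination hz⟩

theorem re_im_of_fiberDiscr_eq_zero {z : ℂ} (hz : fiberDiscr z = 0) :
    z.im = -(1 / 6) ∧ 36 * z.re ^ 2 - 36 * z.re + 1 = 0 := by
  have hre := congrArg re hz
  have him := congrArg im hz
  simp only [fiberDiscr, pow_two, add_re, sub_re, mul_re, re_ofNat, I_re, mul_zero, im_ofNat, I_im,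
    mul_one, sub_self, zero_mul, mul_im, add_zero, zero_sub, add_im, zero_add, one_re, zero_re,
    sub_im, one_im, zero_im] at hre him
  have hy : z.im = -(1 / 6) := by
    have : (6 * z.im + 1) * (1 - 2 * z.re) = 0 := by linear_combination hre
    rcases mul_eq_zero.mp this with h | h
    · linarith
    -- `Re z = 1/2` would leave `6 y² + 2 y + 3/2 = 0` for `y = Im z`, which has no real root
    · nlinarith [sq_nonneg (z.im + 1 / 6)]
  refine ⟨hy, ?_⟩
  rw [hy] at him
  linear_combination 6 * him

theorem norm_add_norm_one_sub_of_fiberDiscr_eq_zero {z : ℂ} (hz : fiberDiscr z = 0) :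
    ‖z‖ + ‖1 - z‖ = 2 / √3 := by
  obtain ⟨hy, hx⟩ := re_im_of_fiberDiscr_eq_zero hz
  have h1 : ‖z‖ ^ 2 = z.re := by
    rw [Complex.sq_norm, normSq_apply, hy]; linear_combination hx / 36
  have h2 : ‖1 - z‖ ^ 2 = 1 - z.re := by
    rw [Complex.sq_norm, normSq_apply]
    simp only [sub_re, one_re, sub_im, one_im, hy]
    linear_combination hx / 36
  have h12 : ‖z‖ * ‖1 - z‖ = 1 / 6 := by
    refine (sq_eq_sq₀ (by positivity) (by norm_num)).mp ?_
    rw [mul_pow, h1, h2]; linear_combination -hx / 36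
  refine (sq_eq_sq₀ (by positivity) (by positivity)).mp ?_
  rw [div_pow, Real.sq_sqrt (by norm_num)]
  linear_combination h1 + h2 + 2 * h12

theorem stmt_19_general (t : ℝ) :
    (∃ w₁ w₂ w₃ w₄ : ℂ,
        w₁ * w₂ + w₃ * w₄ = 1 ∧
        ‖w₁‖ ^ 2 + ‖w₂‖ ^ 2 + ‖w₃‖ ^ 2 + ‖w₄‖ ^ 2 =
          2 * t ∧
        6 * Complex.I * w₃ ^ 2 * w₄ ^ 2 - (2 + 6 * Complex.I) * (w₃ * w₄) + 1 = 0) ↔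
      2 / Real.sqrt 3 ≤ t := by
  have hdiscr (w₃ w₄ : ℂ) : 6 * I * w₃ ^ 2 * w₄ ^ 2 - (2 + 6 * I) * (w₃ * w₄) + 1 =
      fiberDiscr (w₃ * w₄) := by
    rw [fiberDiscr]; ring
  simp only [hdiscr]
  refine (exists_mul_add_mul_eq_one_iff (fiberDiscr · = 0) (2 * t)).trans ?_
  constructor
  · rintro ⟨z, hz, h⟩
    linarith [norm_add_norm_one_sub_of_fiberDiscr_eq_zero hz]
  · intro h
    obtain ⟨z, hz⟩ := exists_fiberDiscr_eq_zero
    exact ⟨z, hz, by linarith [norm_add_norm_one_sub_of_fiberDiscr_eq_zero hz]⟩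

/-- For `t > 1`, there is a point of `M_t³` (in the `w`-coordinates) where the
discriminant `6i·w₃²w₄² − (2+6i)·w₃w₄ + 1` of the fiber quadratic vanishes iff
`t ≥ 2/√3`. -/
theorem stmt_19 (t : ℝ) (ht : 1 < t) :
    (∃ w₁ w₂ w₃ w₄ : ℂ,
        w₁ * w₂ + w₃ * w₄ = 1 ∧
        ‖w₁‖ ^ 2 + ‖w₂‖ ^ 2 + ‖w₃‖ ^ 2 + ‖w₄‖ ^ 2 =
          2 * t ∧
        6 * Complex.I * w₃ ^ 2 * w₄ ^ 2 - (2 + 6 * Complex.I) * (w₃ * w₄) + 1 = 0) ↔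
      2 / Real.sqrt 3 ≤ t :=
  stmt_19_general t
end
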